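/- arXiv:1209.6116 — 3 statements merged into one kernel-verified Lean document; each statement's English description precedes it below -/
import Mathlib

section
/- Let x^0 > 0 and define the classic EM iteration x^{k+1} = P(x^k). Then for every k ≥ 0 one has I_A^b(x^{k+1}) ≤ I_A^b(x^k), and moreover the stronger estimate I(x^{k+1}, x^k) ≤ I_A^b(x^k) − I_A^b(x^{k+1}) holds. -/
open Finset Filter Topology

noncomputable def dd {M N : ℕ} (A : Fin M → Fin N → ℝ) (x : Fin N → ℝ) (i : Fin M) : ℝ :=
  ∑ j, A i j * x j

noncomputable def ff {M N : ℕ} (A : Fin M → Fin N → ℝ) (b : Fin M → ℝ) (x : Fin N → ℝ) (j : Fin N) : ℝ :=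
  ∑ i, A i j * b i / dd A x i

noncomputable def EMop {M N : ℕ} (A : Fin M → Fin N → ℝ) (b : Fin M → ℝ) (x : Fin N → ℝ) : Fin N → ℝ :=
  fun j => x j * ff A b x j

noncomputable def KL {N : ℕ} (u v : Fin N → ℝ) : ℝ :=
  (∑ j, u j * Real.log (u j / v j)) - ∑ j, (u j - v j)

noncomputable def IAb {M N : ℕ} (A : Fin M → Fin N → ℝ) (b : Fin M → ℝ) (x : Fin N → ℝ) : ℝ :=
  (∑ i, b i * Real.log (b i / dd A x i)) - ∑ i, (b i - dd A x i)

noncomputable def finSup0 {ι : Type*} (s : Finset ι) (g : ι → ℝ) : ℝ :=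
  if h : s.Nonempty then s.sup' h g else 0

noncomputable def finInf0 {ι : Type*} (s : Finset ι) (g : ι → ℝ) : ℝ :=
  if h : s.Nonempty then s.inf' h g else 0

/-!
With `y = P x`, the column sums give `I(x) - I(y) = ∑ᵢ bᵢ log ((Ay)ᵢ / (Ax)ᵢ) - (∑ y - ∑ x)` and
`I(y, x) = ∑ⱼ yⱼ log fⱼ(x) - (∑ y - ∑ x)`, so the estimate reduces to
`∑ⱼ yⱼ log fⱼ(x) ≤ ∑ᵢ bᵢ log ((Ay)ᵢ / (Ax)ᵢ)`. Regrouping the left side by rows, this is Jensen's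
inequality for `log` in each row, with weights `aᵢⱼ xⱼ / (Ax)ᵢ` and `(Ay)ᵢ = ∑ⱼ aᵢⱼ xⱼ fⱼ(x)`.
Monotonicity of `I_A^b` then follows from `I(y, x) ≥ 0`.
-/

open InformationTheory Real

theorem sum_mul_log_le_mul_log_sum_div {ι : Type*} (s : Finset ι) {a p : ι → ℝ}
    (ha : ∀ j ∈ s, 0 ≤ a j) (hp : ∀ j ∈ s, 0 < p j) (hs : 0 < ∑ j ∈ s, a j) :
    ∑ j ∈ s, a j * log (p j) ≤
      (∑ j ∈ s, a j) * log ((∑ j ∈ s, a j * p j) / ∑ j ∈ s, a j) := by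
  set d := ∑ j ∈ s, a j
  have jensen := strictConcaveOn_log_Ioi.concaveOn.le_map_sum (t := s) (w := fun j => a j / d)
    (p := p) (fun j hj => div_nonneg (ha j hj) hs.le)
    (by rw [← Finset.sum_div, div_self hs.ne']) hp
  simp only [smul_eq_mul, div_mul_eq_mul_div, ← Finset.sum_div] at jensen
  rwa [div_le_iff₀' hs] at jensen

theorem KL_nonneg {N : ℕ} {u v : Fin N → ℝ} (hu : ∀ j, 0 ≤ u j) (hv : ∀ j, 0 < v j) :
    0 ≤ KL u v := by
  have term_eq (j : Fin N) : u j * log (u j / v j) - (u j - v j) = v j * klFun (u j / v j) := by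
    simp only [klFun, mul_add, mul_sub, ← mul_assoc, mul_div_cancel₀ _ (hv j).ne']
    ring
  rw [KL, ← Finset.sum_sub_distrib]
  exact Finset.sum_nonneg fun j _ =>
    (term_eq j).symm ▸ mul_nonneg (hv j).le (klFun_nonneg (div_nonneg (hu j) (hv j).le))

section EM

variable {M N : ℕ} {A : Fin M → Fin N → ℝ} {b : Fin M → ℝ} {x y : Fin N → ℝ}

theorem dd_pos (hA : ∀ i j, 0 ≤ A i j) (hrow : ∀ i, ∃ j, 0 < A i j) (hx : ∀ j, 0 < x j)
    (i : Fin M) : 0 < dd A x i := by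
  obtain ⟨j, hj⟩ := hrow i
  exact Finset.sum_pos' (fun j _ => mul_nonneg (hA i j) (hx j).le)
    ⟨j, Finset.mem_univ j, mul_pos hj (hx j)⟩

theorem sum_dd (hcol : ∀ j, ∑ i, A i j = 1) (x : Fin N → ℝ) : ∑ i, dd A x i = ∑ j, x j := by
  simp only [dd]
  rw [Finset.sum_comm]
  simp only [← Finset.sum_mul, hcol, one_mul]

theorem ff_pos (hA : ∀ i j, 0 ≤ A i j) (hcol : ∀ j, ∑ i, A i j = 1)
    (hrow : ∀ i, ∃ j, 0 < A i j) (hb : ∀ i, 0 < b i) (hx : ∀ j, 0 < x j) (j : Fin N) :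
    0 < ff A b x j := by
  obtain ⟨i, -, hi⟩ : ∃ i ∈ Finset.univ, (0 : ℝ) < A i j :=
    Finset.exists_lt_of_sum_lt (by simp [hcol j])
  have hd := dd_pos hA hrow hx
  exact Finset.sum_pos' (fun i _ => div_nonneg (mul_nonneg (hA i j) (hb i).le) (hd i).le)
    ⟨i, Finset.mem_univ i, div_pos (mul_pos hi (hb i)) (hd i)⟩

theorem EMop_pos (hA : ∀ i j, 0 ≤ A i j) (hcol : ∀ j, ∑ i, A i j = 1)
    (hrow : ∀ i, ∃ j, 0 < A i j) (hb : ∀ i, 0 < b i) (hx : ∀ j, 0 < x j) (j : Fin N) :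
    0 < EMop A b x j :=
  mul_pos (hx j) (ff_pos hA hcol hrow hb hx j)

theorem IAb_sub_IAb (hcol : ∀ j, ∑ i, A i j = 1) (hb : ∀ i, 0 < b i)
    (hx : ∀ i, 0 < dd A x i) (hy : ∀ i, 0 < dd A y i) :
    IAb A b x - IAb A b y =
      ∑ i, b i * log (dd A y i / dd A x i) - (∑ j, y j - ∑ j, x j) := by
  have log_diff (i : Fin M) : b i * log (b i / dd A x i) - b i * log (b i / dd A y i) =
      b i * log (dd A y i / dd A x i) := by
    rw [log_div (hb i).ne' (hx i).ne', log_div (hb i).ne' (hy i).ne',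
      log_div (hy i).ne' (hx i).ne']
    ring
  simp only [IAb, Finset.sum_sub_distrib, sum_dd hcol, ← log_diff]
  ring

theorem KL_EMop (hx : ∀ j, 0 < x j) :
    KL (EMop A b x) x =
      ∑ j, EMop A b x j * log (ff A b x j) - (∑ j, EMop A b x j - ∑ j, x j) := by
  simp only [KL, Finset.sum_sub_distrib]
  congr 2 with j
  rw [EMop, mul_div_cancel_left₀ _ (hx j).ne']

theorem sum_EMop_mul_log_ff_le (hA : ∀ i j, 0 ≤ A i j) (hcol : ∀ j, ∑ i, A i j = 1)
    (hrow : ∀ i, ∃ j, 0 < A i j) (hb : ∀ i, 0 < b i) (hx : ∀ j, 0 < x j) :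
    ∑ j, EMop A b x j * log (ff A b x j) ≤
      ∑ i, b i * log (dd A (EMop A b x) i / dd A x i) := by
  have hd := dd_pos hA hrow hx
  have regroup : ∑ j, EMop A b x j * log (ff A b x j) =
      ∑ i, b i / dd A x i * ∑ j, A i j * x j * log (ff A b x j) := by
    simp only [EMop, ff, Finset.mul_sum, Finset.sum_mul]
    rw [Finset.sum_comm]
    refine Finset.sum_congr rfl fun i _ => Finset.sum_congr rfl fun j _ => ?_
    ring
  rw [regroup]
  refine Finset.sum_le_sum fun i _ => ?_
  have row := sum_mul_log_le_mul_log_sum_div Finset.univ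
    (fun j _ => mul_nonneg (hA i j) (hx j).le) (fun j _ => ff_pos hA hcol hrow hb hx j) (hd i)
  calc b i / dd A x i * ∑ j, A i j * x j * log (ff A b x j)
      ≤ b i / dd A x i * (dd A x i * log (dd A (EMop A b x) i / dd A x i)) :=
        mul_le_mul_of_nonneg_left (by simpa only [dd, EMop, mul_assoc] using row)
          (div_nonneg (hb i).le (hd i).le)
    _ = b i * log (dd A (EMop A b x) i / dd A x i) := by
        rw [← mul_assoc, div_mul_cancel₀ _ (hd i).ne']

theorem KL_EMop_le (hA : ∀ i j, 0 ≤ A i j) (hcol : ∀ j, ∑ i, A i j = 1)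
    (hrow : ∀ i, ∃ j, 0 < A i j) (hb : ∀ i, 0 < b i) (hx : ∀ j, 0 < x j) :
    KL (EMop A b x) x ≤ IAb A b x - IAb A b (EMop A b x) := by
  rw [KL_EMop hx, IAb_sub_IAb hcol hb (dd_pos hA hrow hx)
    (dd_pos hA hrow (EMop_pos hA hcol hrow hb hx))]
  linarith [sum_EMop_mul_log_ff_le hA hcol hrow hb hx]

end EM

theorem stmt_1_general
    (M N : ℕ)
    (A : Fin M → Fin N → ℝ) (b : Fin M → ℝ)
    (hA : ∀ i j, 0 ≤ A i j)
    (hcol : ∀ j, ∑ i, A i j = 1)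
    (hrow : ∀ i, ∃ j, 0 < A i j)
    (hb : ∀ i, 0 < b i)
    (x : ℕ → Fin N → ℝ)
    (hx0 : ∀ j, 0 < x 0 j)
    (hiter : ∀ k, x (k + 1) = EMop A b (x k)) :
    ∀ k, IAb A b (x (k + 1)) ≤ IAb A b (x k) ∧
      KL (x (k + 1)) (x k) ≤ IAb A b (x k) - IAb A b (x (k + 1)) := by
  have hpos : ∀ k, ∀ j, 0 < x k j := by
    intro k
    induction k with
    | zero => exact hx0
    | succ k ih => rw [hiter k]; exact EMop_pos hA hcol hrow hb ih
  intro k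
  have descent : KL (x (k + 1)) (x k) ≤ IAb A b (x k) - IAb A b (x (k + 1)) := by
    rw [hiter k]
    exact KL_EMop_le hA hcol hrow hb (hpos k)
  have hKL := KL_nonneg (fun j => (hpos (k + 1) j).le) (hpos k)
  exact ⟨by linarith, descent⟩

theorem stmt_1
    (M N : ℕ) (hM : 0 < M) (hN : 0 < N)
    (A : Fin M → Fin N → ℝ) (b : Fin M → ℝ)
    (hA : ∀ i j, 0 ≤ A i j)
    (hcol : ∀ j, ∑ i, A i j = 1)
    (hrow : ∀ i, ∃ j, 0 < A i j)
    (hb : ∀ i, 0 < b i)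
    (x : ℕ → Fin N → ℝ)
    (hx0 : ∀ j, 0 < x 0 j)
    (hiter : ∀ k, x (k + 1) = EMop A b (x k)) :
    ∀ k, IAb A b (x (k + 1)) ≤ IAb A b (x k) ∧
      KL (x (k + 1)) (x k) ≤ IAb A b (x k) - IAb A b (x (k + 1)) :=
  stmt_1_general M N A b hA hcol hrow hb x hx0 hiter
end

section
/- Let x̂ ≥ 0 with d_i(x̂) > 0 for all i be a fixed point of the EM operator (f_j(x̂) = 1 for every j with x̂_j > 0). Let x > 0, β > 0, v ∈ ℝ^N with y = x + βv > 0 componentwise, set z = P(y), and assume I_A^b(z) ≥ I_A^b(x̂). Put S^- = {j : v_j < 0}, S^+ = {j : v_j > 0}, and for some ρ > 0 let B^- = max{ρ + ∑_{j ∈ S^-} z_j, ∑_{j ∈ S^-} x̂_j} and B^+ = min{∑_{j ∈ S^+} z_j, ∑_{j ∈ S^+} x̂_j} (with max_{j ∈ S^-}(−v_j/y_j) and min_{j ∈ S^+}(v_j/y_j) interpreted as 0 when the corresponding set is empty). If the decreasing condition β · max_{j ∈ S^-}(−v_j/y_j) · B^- − β · min_{j ∈ S^+}(v_j/y_j) ·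 B^+ + β ∑_{j=1}^N v_j < I_A^b(y) − I_A^b(z) holds, then I(x̂, z) ≤ I(x̂, x). -/
open Finset Filter Topology

theorem stmt_8
    (M N : ℕ) (hM : 0 < M) (hN : 0 < N)
    (A : Fin M → Fin N → ℝ) (b : Fin M → ℝ)
    (hA : ∀ i j, 0 ≤ A i j)
    (hcol : ∀ j, ∑ i, A i j = 1)
    (hrow : ∀ i, ∃ j, 0 < A i j)
    (hb : ∀ i, 0 < b i)
    (xh : Fin N → ℝ) (hxh : ∀ j, 0 ≤ xh j)
    (hd : ∀ i, 0 < dd A xh i)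
    (hfix : ∀ j, 0 < xh j → ff A b xh j = 1)
    (x v : Fin N → ℝ) (β : ℝ)
    (hx : ∀ j, 0 < x j) (hβ : 0 < β)
    (y : Fin N → ℝ) (hy : y = fun j => x j + β * v j)
    (hypos : ∀ j, 0 < y j)
    (z : Fin N → ℝ) (hz : z = EMop A b y)
    (hge : IAb A b xh ≤ IAb A b z)
    (Sm Sp : Finset (Fin N))
    (hSm : Sm = Finset.univ.filter (fun j => v j < 0))
    (hSp : Sp = Finset.univ.filter (fun j => 0 < v j))
    (ρ : ℝ) (hρ : 0 < ρ)
    (Bm Bp : ℝ)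
    (hBm : Bm = max (ρ + ∑ j ∈ Sm, z j) (∑ j ∈ Sm, xh j))
    (hBp : Bp = min (∑ j ∈ Sp, z j) (∑ j ∈ Sp, xh j))
    (hdec : β * finSup0 Sm (fun j => -v j / y j) * Bm
          - β * finInf0 Sp (fun j => v j / y j) * Bp
          + β * (∑ j, v j) < IAb A b y - IAb A b z) :
    KL xh z ≤ KL xh x := by
  -- positivity facts
  have hdy : ∀ i, 0 < dd A y i := by
    intro i
    obtain ⟨j0, hj0⟩ := hrow i
    exact Finset.sum_pos' (fun j _ => mul_nonneg (hA i j) (hypos j).le)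
      ⟨j0, Finset.mem_univ _, mul_pos hj0 (hypos j0)⟩
  have hcolpos : ∀ j, ∃ i, 0 < A i j := by
    intro j
    by_contra h
    push_neg at h
    have : ∑ i, A i j = 0 := Finset.sum_eq_zero (fun i _ => le_antisymm (h i) (hA i j))
    rw [hcol j] at this; norm_num at this
  have hffy : ∀ j, 0 < ff A b y j := by
    intro j
    obtain ⟨i0, hi0⟩ := hcolpos j
    exact Finset.sum_pos' (fun i _ => div_nonneg (mul_nonneg (hA i j) (hb i).le) (hdy i).le)
      ⟨i0, Finset.mem_univ _, div_pos (mul_pos hi0 (hb i0)) (hdy i0)⟩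
  have hzpos : ∀ j, 0 < z j := by
    intro j; rw [hz]; exact mul_pos (hypos j) (hffy j)
  have hdz : ∀ i, 0 < dd A z i := by
    intro i
    obtain ⟨j0, hj0⟩ := hrow i
    exact Finset.sum_pos' (fun j _ => mul_nonneg (hA i j) (hzpos j).le)
      ⟨j0, Finset.mem_univ _, mul_pos hj0 (hzpos j0)⟩
  -- sum identities
  have sumd : ∀ w : Fin N → ℝ, ∑ i, dd A w i = ∑ j, w j := by
    intro w
    unfold dd
    rw [Finset.sum_comm]
    simp only [← Finset.sum_mul, hcol, one_mul]
  have sumz : ∑ j, z j = ∑ i, b i := by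
    rw [hz]
    unfold EMop ff
    have h1 : ∀ j : Fin N, y j * ∑ i, A i j * b i / dd A y i
        = ∑ i, (b i / dd A y i) * (A i j * y j) := by
      intro j
      rw [Finset.mul_sum]
      congr 1; funext i; ring
    simp only [h1]
    rw [Finset.sum_comm]
    have h2 : ∀ i : Fin M, ∑ j, (b i / dd A y i) * (A i j * y j) = b i := by
      intro i
      rw [← Finset.mul_sum]
      have h3 : ∑ j, A i j * y j = dd A y i := rfl
      rw [h3, div_mul_cancel₀ _ (hdy i).ne']
    simp only [h2]
  have sumxh : ∑ j, xh j = ∑ i, b i := by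
    have h1 : ∑ j, xh j = ∑ j, xh j * ff A b xh j := by
      apply Finset.sum_congr rfl
      intro j _
      rcases eq_or_lt_of_le (hxh j) with h | h
      · rw [← h]; ring
      · rw [hfix j h, mul_one]
    rw [h1]
    unfold ff
    have h4 : ∀ j : Fin N, xh j * ∑ i, A i j * b i / dd A xh i
        = ∑ i, (b i / dd A xh i) * (A i j * xh j) := by
      intro j
      rw [Finset.mul_sum]
      congr 1; funext i; ring
    simp only [h4]
    rw [Finset.sum_comm]
    apply Finset.sum_congr rfl
    intro i _
    rw [← Finset.mul_sum]
    have h3 : ∑ j, A i j * xh j = dd A xh i := rfl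
    rw [h3, div_mul_cancel₀ _ (hd i).ne']
  -- Jensen step
  have key1 : ∑ i, b i * Real.log (dd A xh i / dd A y i)
      ≤ ∑ j, xh j * Real.log (ff A b y j) := by
    have lhs_eq : ∑ i, b i * Real.log (dd A xh i / dd A y i)
        = ∑ j, ∑ i, xh j * ((A i j * b i / dd A xh i) * Real.log (dd A xh i / dd A y i)) := by
      rw [Finset.sum_comm]
      apply Finset.sum_congr rfl
      intro i _
      have h5 : ∀ j : Fin N, xh j * ((A i j * b i / dd A xh i) * Real.log (dd A xh i / dd A y i))
          = (b i / dd A xh i * Real.log (dd A xh i / dd A y i)) * (A i j * xh j) := by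
        intro j; ring
      simp only [h5]
      rw [← Finset.mul_sum]
      have h3 : ∑ j, A i j * xh j = dd A xh i := rfl
      rw [h3]
      field_simp [(hd i).ne']
    rw [lhs_eq]
    apply Finset.sum_le_sum
    intro j _
    rw [← Finset.mul_sum]
    rcases eq_or_lt_of_le (hxh j) with h | h
    · rw [← h]; simp
    apply mul_le_mul_of_nonneg_left _ (hxh j)
    have hw : ∀ i ∈ Finset.univ, (0:ℝ) ≤ A i j * b i / dd A xh i := by
      intro i _
      exact div_nonneg (mul_nonneg (hA i j) (hb i).le) (hd i).le
    have hw1 : ∑ i, A i j * b i / dd A xh i = 1 := hfix j h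
    have hmem : ∀ i ∈ Finset.univ, dd A xh i / dd A y i ∈ Set.Ioi (0:ℝ) :=
      fun i _ => div_pos (hd i) (hdy i)
    have hjen := (strictConcaveOn_log_Ioi.concaveOn).le_map_sum hw hw1 hmem
    simp only [smul_eq_mul] at hjen
    have hff : ff A b y j = ∑ i, (A i j * b i / dd A xh i) * (dd A xh i / dd A y i) := by
      unfold ff
      apply Finset.sum_congr rfl
      intro i _
      field_simp [(hd i).ne', (hdy i).ne']
    rw [hff]
    exact hjen
  -- log bound per coordinate
  have key2 : ∀ j, β * v j / y j ≤ Real.log (y j / x j) := by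
    intro j
    have hxy : x j = y j - β * v j := by rw [hy]; ring
    have h1 : Real.log (x j / y j) ≤ x j / y j - 1 :=
      Real.log_le_sub_one_of_pos (div_pos (hx j) (hypos j))
    have h2 : Real.log (y j / x j) = - Real.log (x j / y j) := by
      rw [← Real.log_inv]
      congr 1
      rw [inv_div]
    rw [h2]
    have h3 : x j / y j - 1 = - (β * v j / y j) := by
      rw [hxy, div_sub_one (hypos j).ne']
      ring_nf
    linarith [h1, h3.le]
  have key2sum : ∑ j, xh j * (β * v j / y j) ≤ ∑ j, xh j * Real.log (y j / x j) :=
    Finset.sum_le_sum (fun j _ => mul_le_mul_of_nonneg_left (key2 j) (hxh j))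
  -- sup/inf bounds
  have hsm : -(β * finSup0 Sm (fun j => -v j / y j) * Bm) ≤ ∑ j ∈ Sm, xh j * (β * v j / y j) := by
    unfold finSup0
    by_cases h : Sm.Nonempty
    · rw [dif_pos h]
      set s := Sm.sup' h (fun j => -v j / y j) with hs
      have hsnn : 0 ≤ s := by
        obtain ⟨j, hj⟩ := h
        have hjv : v j < 0 := by rw [hSm] at hj; simpa using hj
        have hpos : 0 < -v j / y j := div_pos (by linarith) (hypos j)
        refine le_trans hpos.le ?_
        rw [hs]
        exact Finset.le_sup' (fun j => -v j / y j) hj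
      have step1 : ∀ j ∈ Sm, -(β * s) * xh j ≤ xh j * (β * v j / y j) := by
        intro j hj
        have h1 : -v j / y j ≤ s := by
          rw [hs]; exact Finset.le_sup' (fun j => -v j / y j) hj
        have h2 : -s ≤ v j / y j := by
          have h3 := neg_le_neg h1
          rwa [neg_div, neg_neg] at h3
        calc -(β * s) * xh j = (β * xh j) * (-s) := by ring
          _ ≤ (β * xh j) * (v j / y j) :=
              mul_le_mul_of_nonneg_left h2 (mul_nonneg hβ.le (hxh j))
          _ = xh j * (β * v j / y j) := by ring
      calc -(β * s * Bm) = (-(β * s)) * Bm := by ring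
        _ ≤ (-(β * s)) * (∑ j ∈ Sm, xh j) := by
            apply mul_le_mul_of_nonpos_left _ (by nlinarith)
            rw [hBm]; exact le_max_right _ _
        _ = ∑ j ∈ Sm, -(β * s) * xh j := by rw [Finset.mul_sum]
        _ ≤ _ := Finset.sum_le_sum step1
    · rw [dif_neg h]
      rw [Finset.not_nonempty_iff_eq_empty] at h
      simp [h]
  have hsp : β * finInf0 Sp (fun j => v j / y j) * Bp ≤ ∑ j ∈ Sp, xh j * (β * v j / y j) := by
    unfold finInf0
    by_cases h : Sp.Nonempty
    · rw [dif_pos h]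
      set s := Sp.inf' h (fun j => v j / y j) with hs
      have hsnn : 0 ≤ s := by
        rw [hs]
        apply Finset.le_inf'
        intro j hj
        have hjv : 0 < v j := by rw [hSp] at hj; simpa using hj
        exact (div_pos hjv (hypos j)).le
      have step1 : ∀ j ∈ Sp, (β * s) * xh j ≤ xh j * (β * v j / y j) := by
        intro j hj
        have h1 : s ≤ v j / y j := by
          rw [hs]; exact Finset.inf'_le (fun j => v j / y j) hj
        calc (β * s) * xh j = (β * xh j) * s := by ring
          _ ≤ (β * xh j) * (v j / y j) :=
              mul_le_mul_of_nonneg_left h1 (mul_nonneg hβ.le (hxh j))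
          _ = xh j * (β * v j / y j) := by ring
      calc β * s * Bp ≤ β * s * (∑ j ∈ Sp, xh j) := by
            apply mul_le_mul_of_nonneg_left _ (by positivity)
            rw [hBp]; exact min_le_right _ _
        _ = ∑ j ∈ Sp, (β * s) * xh j := by rw [Finset.mul_sum]
        _ ≤ _ := Finset.sum_le_sum step1
    · rw [dif_neg h]
      rw [Finset.not_nonempty_iff_eq_empty] at h
      simp [h]
  have hsplit : ∑ j ∈ Sm, xh j * (β * v j / y j) + ∑ j ∈ Sp, xh j * (β * v j / y j)
      ≤ ∑ j, xh j * (β * v j / y j) := by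
    have hdisj : Disjoint Sm Sp := by
      rw [hSm, hSp]
      rw [Finset.disjoint_filter]
      intro j _ hjv
      exact not_lt.mpr hjv.le
    rw [← Finset.sum_union hdisj]
    apply Finset.sum_le_sum_of_subset_of_nonneg (Finset.subset_univ _)
    intro j _ hj
    have hv0 : v j = 0 := by
      rw [Finset.mem_union, hSm, hSp] at hj
      push_neg at hj
      simp only [Finset.mem_filter, Finset.mem_univ, true_and] at hj
      linarith [hj.1, hj.2]
    simp [hv0]
  have key3 : -(β * finSup0 Sm (fun j => -v j / y j) * Bm)
      + β * finInf0 Sp (fun j => v j / y j) * Bp ≤ ∑ j, xh j * (β * v j / y j) := by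
    linarith [hsm, hsp, hsplit]
  -- KL / IAb difference identities
  have E1 : KL xh x - KL xh y = (∑ j, xh j * Real.log (y j / x j)) - β * ∑ j, v j := by
    unfold KL
    have hlog : ∑ j, xh j * Real.log (xh j / x j) - ∑ j, xh j * Real.log (xh j / y j)
        = ∑ j, xh j * Real.log (y j / x j) := by
      rw [← Finset.sum_sub_distrib]
      apply Finset.sum_congr rfl
      intro j _
      rcases eq_or_lt_of_le (hxh j) with h | h
      · rw [← h]; ring
      · rw [← mul_sub]
        congr 1
        rw [Real.log_div h.ne' (hx j).ne', Real.log_div h.ne' (hypos j).ne',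
          Real.log_div (hypos j).ne' (hx j).ne']
        ring
    have hlin : ∑ j, (xh j - x j) - ∑ j, (xh j - y j) = β * ∑ j, v j := by
      rw [← Finset.sum_sub_distrib, Finset.mul_sum]
      apply Finset.sum_congr rfl
      intro j _
      rw [hy]; ring
    linarith [hlog, hlin]
  have E2 : KL xh y - KL xh z = (∑ j, xh j * Real.log (ff A b y j))
      + ((∑ i, dd A y i) - ∑ i, b i) := by
    unfold KL
    have hzy : ∀ j, z j / y j = ff A b y j := by
      intro j
      rw [hz]
      show y j * ff A b y j / y j = _
      rw [mul_comm, mul_div_assoc, div_self (hypos j).ne', mul_one]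
    have hlog : ∑ j, xh j * Real.log (xh j / y j) - ∑ j, xh j * Real.log (xh j / z j)
        = ∑ j, xh j * Real.log (ff A b y j) := by
      rw [← Finset.sum_sub_distrib]
      apply Finset.sum_congr rfl
      intro j _
      rcases eq_or_lt_of_le (hxh j) with h | h
      · rw [← h]; ring
      · rw [← mul_sub]
        congr 1
        rw [← hzy j]
        rw [Real.log_div h.ne' (hypos j).ne', Real.log_div h.ne' (hzpos j).ne',
          Real.log_div (hzpos j).ne' (hypos j).ne']
        ring
    have hlin : ∑ j, (xh j - y j) - ∑ j, (xh j - z j) = ∑ j, z j - ∑ j, y j := by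
      rw [← Finset.sum_sub_distrib, ← Finset.sum_sub_distrib]
      apply Finset.sum_congr rfl
      intro j _; ring
    rw [sumz, ← sumd y] at hlin
    linarith [hlog, hlin]
  have E3 : IAb A b y - IAb A b z = (∑ i, b i * Real.log (dd A z i / dd A y i))
      + ((∑ i, dd A y i) - ∑ i, dd A z i) := by
    unfold IAb
    have hlog : ∑ i, b i * Real.log (b i / dd A y i) - ∑ i, b i * Real.log (b i / dd A z i)
        = ∑ i, b i * Real.log (dd A z i / dd A y i) := by
      rw [← Finset.sum_sub_distrib]
      apply Finset.sum_congr rfl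
      intro i _
      rw [← mul_sub]
      congr 1
      rw [Real.log_div (hb i).ne' (hdy i).ne', Real.log_div (hb i).ne' (hdz i).ne',
        Real.log_div (hdz i).ne' (hdy i).ne']
      ring
    have hlin : ∑ i, (b i - dd A y i) - ∑ i, (b i - dd A z i)
        = ∑ i, dd A z i - ∑ i, dd A y i := by
      rw [← Finset.sum_sub_distrib, ← Finset.sum_sub_distrib]
      apply Finset.sum_congr rfl
      intro i _; ring
    linarith [hlog, hlin]
  have E4 : IAb A b z - IAb A b xh = (∑ i, b i * Real.log (dd A xh i / dd A z i))
      + ((∑ i, dd A z i) - ∑ i, b i) := by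
    unfold IAb
    have hlog : ∑ i, b i * Real.log (b i / dd A z i) - ∑ i, b i * Real.log (b i / dd A xh i)
        = ∑ i, b i * Real.log (dd A xh i / dd A z i) := by
      rw [← Finset.sum_sub_distrib]
      apply Finset.sum_congr rfl
      intro i _
      rw [← mul_sub]
      congr 1
      rw [Real.log_div (hb i).ne' (hdz i).ne', Real.log_div (hb i).ne' (hd i).ne',
        Real.log_div (hd i).ne' (hdz i).ne']
      ring
    have hlin : ∑ i, (b i - dd A z i) - ∑ i, (b i - dd A xh i)
        = ∑ i, dd A xh i - ∑ i, dd A z i := by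
      rw [← Finset.sum_sub_distrib, ← Finset.sum_sub_distrib]
      apply Finset.sum_congr rfl
      intro i _; ring
    have hdxh : ∑ i, dd A xh i = ∑ i, b i := by rw [sumd xh, sumxh]
    rw [hdxh] at hlin
    linarith [hlog, hlin]
  have E5 : ∑ i, b i * Real.log (dd A xh i / dd A y i)
      = ∑ i, b i * Real.log (dd A z i / dd A y i)
      + ∑ i, b i * Real.log (dd A xh i / dd A z i) := by
    rw [← Finset.sum_add_distrib]
    apply Finset.sum_congr rfl
    intro i _
    rw [← mul_add]
    congr 1
    rw [Real.log_div (hdz i).ne' (hdy i).ne', Real.log_div (hd i).ne' (hdz i).ne',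
      Real.log_div (hd i).ne' (hdy i).ne']
    ring
  linarith [key1, key2sum, key3, hdec, hge, E1, E2, E3, E4, E5]
end

section
/- Let x̂ ≥ 0 with d_i(x̂) > 0 for all i satisfy the Kuhn–Tucker conditions for minimizing I_A^b over the nonnegative orthant: f_j(x̂) = 1 for every j with x̂_j > 0, and 0 ≤ f_j(x̂) ≤ 1 for every j with x̂_j = 0. Then x̂ is a minimizer of I_A^b on ℝ_+^N, i.e. I_A^b(x̂) ≤ I_A^b(x) for every x ≥ 0 with d_i(x) > 0 for all i. -/
open Finset Filter Topology

/-! The map `t ↦ b log (b / t) - (b - t)` is convex on `t > 0` with derivative `1 - b / t`, so `I_A^b`,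
a sum of such maps composed with the linear map `x ↦ d(x)`, lies above its tangent planes. Because the
columns of `A` sum to one, the gradient of `I_A^b` at `x̂` is `j ↦ 1 - f_j(x̂)`, and the Kuhn–Tucker
conditions say exactly that this gradient pairs nonnegatively with `x - x̂` for every `x ≥ 0`. -/

lemma mul_log_div_sub_tangent_le {b s t : ℝ} (hb : 0 < b) (hs : 0 < s) (ht : 0 < t) :
    b * Real.log (b / s) - (b - s) + (1 - b / s) * (t - s) ≤ b * Real.log (b / t) - (b - t) := by
  have hlog : Real.log (t / s) ≤ t / s - 1 := Real.log_le_sub_one_of_pos (by positivity)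
  have hsplit : Real.log (b / s) = Real.log (b / t) + Real.log (t / s) := by
    rw [← Real.log_mul (by positivity) (by positivity), div_mul_div_cancel₀ ht.ne']
  have hlin : (1 - b / s) * (t - s) = t - s - b * (t / s - 1) := by
    field_simp
  rw [hsplit, hlin]
  linarith [mul_le_mul_of_nonneg_left hlog hb.le]

lemma IAb_eq_sum {M N : ℕ} (A : Fin M → Fin N → ℝ) (b : Fin M → ℝ) (x : Fin N → ℝ) :
    IAb A b x = ∑ i, (b i * Real.log (b i / dd A x i) - (b i - dd A x i)) := by
  rw [IAb, ← Finset.sum_sub_distrib]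

lemma sum_mul_dd {M N : ℕ} (A : Fin M → Fin N → ℝ) (c : Fin M → ℝ) (y : Fin N → ℝ) :
    ∑ i, c i * dd A y i = ∑ j, (∑ i, A i j * c i) * y j := by
  simp only [dd, Finset.mul_sum, Finset.sum_mul]
  rw [Finset.sum_comm]
  exact Finset.sum_congr rfl fun _ _ => Finset.sum_congr rfl fun _ _ => by ring

lemma sum_one_sub_div_dd_mul_dd {M N : ℕ} (A : Fin M → Fin N → ℝ) (b : Fin M → ℝ)
    (hcol : ∀ j, ∑ i, A i j = 1) (xh y : Fin N → ℝ) :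
    ∑ i, (1 - b i / dd A xh i) * dd A y i = ∑ j, (1 - ff A b xh j) * y j := by
  rw [sum_mul_dd]
  refine Finset.sum_congr rfl fun j _ => ?_
  simp only [ff, mul_sub, mul_one, Finset.sum_sub_distrib, hcol, mul_div_assoc]

lemma IAb_add_sum_mul_sub_le {M N : ℕ} (A : Fin M → Fin N → ℝ) (b : Fin M → ℝ)
    (hcol : ∀ j, ∑ i, A i j = 1) (hb : ∀ i, 0 < b i) {xh x : Fin N → ℝ}
    (hd : ∀ i, 0 < dd A xh i) (hdx : ∀ i, 0 < dd A x i) :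
    IAb A b xh + ∑ j, (1 - ff A b xh j) * (x j - xh j) ≤ IAb A b x := by
  have hgrad : ∑ j, (1 - ff A b xh j) * (x j - xh j)
      = ∑ i, (1 - b i / dd A xh i) * (dd A x i - dd A xh i) := by
    simp only [mul_sub, Finset.sum_sub_distrib, sum_one_sub_div_dd_mul_dd A b hcol]
  rw [hgrad, IAb_eq_sum, IAb_eq_sum, ← Finset.sum_add_distrib]
  exact Finset.sum_le_sum fun i _ => mul_log_div_sub_tangent_le (hb i) (hd i) (hdx i)

lemma sum_one_sub_mul_sub_nonneg_of_kuhnTucker {ι : Type*} [Fintype ι] {f xh x : ι → ℝ}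
    (hxh : ∀ j, 0 ≤ xh j) (hx : ∀ j, 0 ≤ x j)
    (hKT1 : ∀ j, 0 < xh j → f j = 1) (hKT2 : ∀ j, xh j = 0 → f j ≤ 1) :
    0 ≤ ∑ j, (1 - f j) * (x j - xh j) := by
  refine Finset.sum_nonneg fun j _ => ?_
  rcases (hxh j).lt_or_eq with hpos | hzero
  · simp [hKT1 j hpos]
  · rw [← hzero, sub_zero]
    exact mul_nonneg (sub_nonneg.mpr (hKT2 j hzero.symm)) (hx j)

theorem stmt_11_general
    (M N : ℕ)
    (A : Fin M → Fin N → ℝ) (b : Fin M → ℝ)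
    (hcol : ∀ j, ∑ i, A i j = 1)
    (hb : ∀ i, 0 < b i)
    (xh : Fin N → ℝ) (hxh : ∀ j, 0 ≤ xh j)
    (hd : ∀ i, 0 < dd A xh i)
    (hKT1 : ∀ j, 0 < xh j → ff A b xh j = 1)
    (hKT2 : ∀ j, xh j = 0 → 0 ≤ ff A b xh j ∧ ff A b xh j ≤ 1) :
    ∀ x : Fin N → ℝ, (∀ j, 0 ≤ x j) → (∀ i, 0 < dd A x i) →
      IAb A b xh ≤ IAb A b x := by
  intro x hx hdx
  have hgrad := sum_one_sub_mul_sub_nonneg_of_kuhnTucker hxh hx hKT1 fun j h => (hKT2 j h).2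
  linarith [IAb_add_sum_mul_sub_le A b hcol hb hd hdx]

theorem stmt_11
    (M N : ℕ) (hM : 0 < M) (hN : 0 < N)
    (A : Fin M → Fin N → ℝ) (b : Fin M → ℝ)
    (hA : ∀ i j, 0 ≤ A i j)
    (hcol : ∀ j, ∑ i, A i j = 1)
    (hrow : ∀ i, ∃ j, 0 < A i j)
    (hb : ∀ i, 0 < b i)
    (xh : Fin N → ℝ) (hxh : ∀ j, 0 ≤ xh j)
    (hd : ∀ i, 0 < dd A xh i)
    (hKT1 : ∀ j, 0 < xh j → ff A b xh j = 1)
    (hKT2 : ∀ j, xh j = 0 → 0 ≤ ff A b xh j ∧ ff A b xh j ≤ 1) :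
    ∀ x : Fin N → ℝ, (∀ j, 0 ≤ x j) → (∀ i, 0 < dd A x i) →
      IAb A b xh ≤ IAb A b x :=
  stmt_11_general M N A b hcol hb xh hxh hd hKT1 hKT2
end
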